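/- For all ρ, x ∈ (0,∞) and all r ∈ ℝ, S_ρ(x,−r) = S_ρ(x^{−1}, r)^{−1}; in particular, S_ρ(1,−r) = S_ρ(1,r)^{−1}. -/

import Mathlib

open Real MeasureTheory Filter Set

noncomputable section

/-- `S` is the (unique) solution of the ODE
`S'(u) = -8ρ S(u)^{1+ρ}/(1+S(u)^ρ)²` with `S(0) = x`, valued in `(0,∞)`. -/
def IsSsol (ρ x : ℝ) (S : ℝ → ℝ) : Prop :=
  (∀ u : ℝ, 0 < S u) ∧ S 0 = x ∧
    ∀ u : ℝ, HasDerivAt S (-(8 * ρ * S u ^ (1 + ρ)) / (1 + S u ^ ρ) ^ 2) u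

/-!
The function `F(s) = (s^ρ - s^{-ρ})/ρ + 2 log s` has derivative `(1 + s^ρ)²/s^{1+ρ}`, the reciprocal
of the right-hand side of the ODE up to the factor `-8ρ`, so `F(S(u)) = F(x) - 8ρu` along every
solution. Since `F` is strictly increasing on `(0,∞)` and `F(1/s) = -F(s)`, both `S_ρ(x,-r)` and
`S_ρ(1/x,r)⁻¹` are the unique point where `F` takes the value `F(x) + 8ρr`.
-/

def firstIntegral (ρ s : ℝ) : ℝ := (s ^ ρ - s ^ (-ρ)) / ρ + 2 * Real.log s

lemma hasDerivAt_firstIntegral {ρ s : ℝ} (hρ : ρ ≠ 0) (hs : 0 < s) :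
    HasDerivAt (firstIntegral ρ) ((1 + s ^ ρ) ^ 2 / s ^ (1 + ρ)) s := by
  have hpow : HasDerivAt (fun t : ℝ => t ^ ρ) (ρ * s ^ (ρ - 1)) s := by
    simpa using Real.hasDerivAt_rpow_const (p := ρ) (Or.inl hs.ne')
  have hpow_neg : HasDerivAt (fun t : ℝ => t ^ (-ρ)) (-ρ * s ^ (-ρ - 1)) s := by
    simpa using Real.hasDerivAt_rpow_const (p := -ρ) (Or.inl hs.ne')
  refine (((hpow.sub hpow_neg).div_const ρ).add
    ((Real.hasDerivAt_log hs.ne').const_mul 2)).congr_deriv ?_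
  rw [Real.rpow_sub hs, Real.rpow_one, show -ρ - 1 = -(ρ + 1) by ring, Real.rpow_neg hs.le,
    Real.rpow_add hs, Real.rpow_one, add_comm 1 ρ, Real.rpow_add hs, Real.rpow_one]
  field_simp
  ring

lemma strictMonoOn_firstIntegral {ρ : ℝ} (hρ : ρ ≠ 0) :
    StrictMonoOn (firstIntegral ρ) (Ioi 0) := by
  apply strictMonoOn_of_deriv_pos (convex_Ioi 0)
  · exact fun s hs => (hasDerivAt_firstIntegral hρ hs).continuousAt.continuousWithinAt
  · intro s hs
    rw [interior_Ioi] at hs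
    rw [(hasDerivAt_firstIntegral hρ hs).deriv]
    have : 0 < 1 + s ^ ρ := by linarith [Real.rpow_pos_of_pos hs ρ]
    have := Real.rpow_pos_of_pos hs (1 + ρ)
    positivity

lemma firstIntegral_inv (ρ : ℝ) {s : ℝ} (hs : 0 ≤ s) :
    firstIntegral ρ s⁻¹ = -firstIntegral ρ s := by
  rw [firstIntegral, firstIntegral, Real.inv_rpow hs, Real.inv_rpow hs, Real.log_inv,
    ← Real.rpow_neg hs, ← Real.rpow_neg hs, neg_neg]
  ring

namespace IsSsol

variable {ρ x : ℝ} {S : ℝ → ℝ}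

lemma hasDerivAt_firstIntegral_comp (hρ : ρ ≠ 0) (h : IsSsol ρ x S) (u : ℝ) :
    HasDerivAt (fun v => firstIntegral ρ (S v)) (-8 * ρ) u := by
  obtain ⟨hpos, -, hS⟩ := h
  refine ((hasDerivAt_firstIntegral hρ (hpos u)).comp u (hS u)).congr_deriv ?_
  have : 0 < 1 + S u ^ ρ := by linarith [Real.rpow_pos_of_pos (hpos u) ρ]
  have := Real.rpow_pos_of_pos (hpos u) (1 + ρ)
  field_simp

lemma firstIntegral_apply (hρ : ρ ≠ 0) (h : IsSsol ρ x S) (u : ℝ) :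
    firstIntegral ρ (S u) = firstIntegral ρ x - 8 * ρ * u := by
  have hderiv : ∀ v, HasDerivAt (fun v => firstIntegral ρ (S v) + 8 * ρ * v) 0 v := fun v =>
    ((h.hasDerivAt_firstIntegral_comp hρ v).add ((hasDerivAt_id v).const_mul (8 * ρ))).congr_deriv
      (by ring)
  have := is_const_of_deriv_eq_zero (fun v => (hderiv v).differentiableAt)
    (fun v => (hderiv v).deriv) u 0
  simp only [mul_zero, add_zero, h.2.1] at this
  linarith

lemma apply_neg_eq_inv {S' : ℝ → ℝ} (hρ : ρ ≠ 0) (h : IsSsol ρ x S) (h' : IsSsol ρ x⁻¹ S')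
    (r : ℝ) : S (-r) = (S' r)⁻¹ := by
  have hx : 0 ≤ x := h.2.1 ▸ (h.1 0).le
  refine (strictMonoOn_firstIntegral hρ).injOn (h.1 (-r)) (inv_pos.2 (h'.1 r)) ?_
  rw [firstIntegral_inv ρ (h'.1 r).le, h.firstIntegral_apply hρ, h'.firstIntegral_apply hρ,
    firstIntegral_inv ρ hx]
  ring

end IsSsol

theorem stmt9 (ρ : ℝ) (hρ : 0 < ρ) :
    (∀ x : ℝ, 0 < x → ∀ S1 S2 : ℝ → ℝ, IsSsol ρ x S1 → IsSsol ρ x⁻¹ S2 →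
      ∀ r : ℝ, S1 (-r) = (S2 r)⁻¹) ∧
    (∀ S : ℝ → ℝ, IsSsol ρ 1 S → ∀ r : ℝ, S (-r) = (S r)⁻¹) :=
  ⟨fun _ _ _ _ h1 h2 r => h1.apply_neg_eq_inv hρ.ne' h2 r,
    fun _ hS r => hS.apply_neg_eq_inv hρ.ne' (by rwa [inv_one]) r⟩

end
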